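/- For every nonnegative integers p and r and every real x with |x| < 1, ∑_{n=0}^∞ C(n+r, r) n^p x^n = (1/(1-x)^{r+1}) · ω_{p,r+1}(x/(1-x)), where ω_{p,r+1}(x) = (1/r!) ∑_{k=0}^p S(p,k)(k+r)! x^k (with the convention 0^0 = 1 when p = 0). -/

import Mathlib

open Finset Real

/-- Stirling numbers of the second kind. -/
def stirling2 : ℕ → ℕ → ℕ
  | 0, 0 => 1
  | 0, _ + 1 => 0
  | _ + 1, 0 => 0
  | p + 1, k + 1 => (k + 1) * stirling2 p (k + 1) + stirling2 p k

/-- The generalized geometric polynomial $\omega_{p,r+1}$. -/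
noncomputable def genGeomPoly (p r : ℕ) (x : ℝ) : ℝ :=
  (1 / r.factorial) * ∑ k ∈ Finset.range (p + 1), (stirling2 p k : ℝ) * (k + r).factorial * x ^ k

/-!
Expanding `n ^ p = ∑ₖ S(p,k) n(n-1)⋯(n-k+1)` and using
`C(n+r,r) · n(n-1)⋯(n-k+1) · r! = (k+r)! · C(n+r,k+r)` reduces the series to a finite combination
of the series `∑ₙ C(n+r,k+r) xⁿ = xᵏ / (1-x)^(k+r+1)`, i.e. of derivatives of the geometric series.
-/

open scoped Nat

theorem stirling2_eq_stirlingSecond : ∀ p k : ℕ, stirling2 p k = Nat.stirlingSecond p k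
  | 0, 0 | 0, _ + 1 | _ + 1, 0 => rfl
  | p + 1, k + 1 => by
    rw [stirling2, Nat.stirlingSecond_succ_succ, stirling2_eq_stirlingSecond p (k + 1),
      stirling2_eq_stirlingSecond p k]

namespace Nat

theorem mul_descFactorial_eq_descFactorial_succ_add (n k : ℕ) :
    n * n.descFactorial k = n.descFactorial (k + 1) + k * n.descFactorial k := by
  rcases le_or_gt k n with h | h
  · rw [descFactorial_succ, Nat.sub_mul, Nat.sub_add_cancel (Nat.mul_le_mul_right _ h)]
  · simp [descFactorial_eq_zero_iff_lt.2 h]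

theorem pow_eq_sum_stirlingSecond_mul_descFactorial (n p : ℕ) :
    n ^ p = ∑ k ∈ range (p + 1), stirlingSecond p k * n.descFactorial k := by
  induction p with
  | zero => simp
  | succ p ih =>
    have shift : ∑ k ∈ range (p + 1), stirlingSecond p k * (k * n.descFactorial k) =
        ∑ k ∈ range (p + 1), (k + 1) * stirlingSecond p (k + 1) * n.descFactorial (k + 1) := by
      rw [sum_range_succ', sum_range_succ, stirlingSecond_eq_zero_of_lt (lt_succ_self p)]
      simp only [mul_zero, zero_mul, add_zero]
      exact sum_congr rfl fun k _ => by ring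
    calc n ^ (p + 1)
        = ∑ k ∈ range (p + 1), stirlingSecond p k * (n * n.descFactorial k) := by
          rw [pow_succ, ih, sum_mul]
          exact sum_congr rfl fun k _ => by ring
      _ = ∑ k ∈ range (p + 1), stirlingSecond p k * n.descFactorial (k + 1) +
            ∑ k ∈ range (p + 1), stirlingSecond p k * (k * n.descFactorial k) := by
          simp only [mul_descFactorial_eq_descFactorial_succ_add, Nat.mul_add, sum_add_distrib]
      _ = ∑ k ∈ range (p + 2), stirlingSecond (p + 1) k * n.descFactorial k := by
          rw [shift, ← sum_add_distrib, sum_range_succ' _ (p + 1)]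
          simp only [stirlingSecond_succ_succ, stirlingSecond_succ_zero, zero_mul, add_zero]
          exact sum_congr rfl fun k _ => by ring

theorem choose_mul_descFactorial_mul_factorial (n r k : ℕ) :
    (n + r).choose r * n.descFactorial k * r ! = (k + r)! * (n + r).choose (k + r) := by
  have split : n.descFactorial k * (n + r).descFactorial r = (n + r).descFactorial (k + r) := by
    simpa using descFactorial_mul_descFactorial (n := n + r) (Nat.le_add_left r k)
  calc (n + r).choose r * n.descFactorial k * r !
      = n.descFactorial k * (n + r).descFactorial r := by
        rw [descFactorial_eq_factorial_mul_choose (n + r) r]; ring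
    _ = (k + r)! * (n + r).choose (k + r) := by rw [split, descFactorial_eq_factorial_mul_choose]

theorem choose_mul_pow_mul_factorial (n r p : ℕ) :
    (n + r).choose r * n ^ p * r ! =
      ∑ k ∈ range (p + 1), stirlingSecond p k * (k + r)! * (n + r).choose (k + r) := by
  rw [pow_eq_sum_stirlingSecond_mul_descFactorial, mul_sum, sum_mul]
  refine sum_congr rfl fun k _ => ?_
  rw [mul_assoc _ (k + r)!, ← choose_mul_descFactorial_mul_factorial]
  ring

end Nat

theorem hasSum_choose_add_mul_geometric {𝕜 : Type*} [NormedField 𝕜]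
    (k r : ℕ) {x : 𝕜} (hx : ‖x‖ < 1) :
    HasSum (fun n : ℕ ↦ ((n + r).choose (k + r) : 𝕜) * x ^ n) (x ^ k / (1 - x) ^ (k + r + 1)) := by
  have shifted := (hasSum_choose_mul_geometric_of_norm_lt_one (k + r) hx).mul_left (x ^ k)
  have vanish : ∑ i ∈ range k, ((i + r).choose (k + r) : 𝕜) * x ^ i = 0 :=
    sum_eq_zero fun i hi ↦ by
      rw [Nat.choose_eq_zero_of_lt (by simp only [mem_range] at hi; omega), Nat.cast_zero, zero_mul]
  refine (hasSum_nat_add_iff' k).mp ?_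
  rw [vanish, sub_zero, div_eq_mul_one_div]
  refine shifted.congr_fun fun n ↦ ?_
  rw [show n + k + r = n + (k + r) by ring, pow_add]
  ring

theorem stmt_18 (p r : ℕ) (x : ℝ) (hx : |x| < 1) :
    ∑' n : ℕ, ((n + r).choose r : ℝ) * (n : ℝ) ^ p * x ^ n
      = (1 / (1 - x) ^ (r + 1)) * genGeomPoly p r (x / (1 - x)) := by
  have h1x : 1 - x ≠ 0 := by linarith [abs_lt.mp hx]
  have hr : (r ! : ℝ) ≠ 0 := by positivity
  have termwise : ∀ n : ℕ, ((n + r).choose r : ℝ) * (n : ℝ) ^ p * x ^ n =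
      (1 / r !) * ∑ k ∈ range (p + 1),
        (stirling2 p k : ℝ) * (k + r)! * (((n + r).choose (k + r) : ℝ) * x ^ n) := by
    intro n
    have := congrArg (Nat.cast (R := ℝ)) (Nat.choose_mul_pow_mul_factorial n r p)
    push_cast at this
    simp only [stirling2_eq_stirlingSecond, ← mul_assoc, ← sum_mul, ← this]
    field_simp
  have hx' : ‖x‖ < 1 := by rwa [Real.norm_eq_abs]
  have series := (hasSum_sum (s := range (p + 1)) fun k _ ↦
    (hasSum_choose_add_mul_geometric k r hx').mul_left ((stirling2 p k : ℝ) * (k + r)!)).mul_left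
      (1 / (r ! : ℝ))
  rw [funext termwise, series.tsum_eq, genGeomPoly, mul_left_comm]
  congr 1
  rw [mul_sum]
  refine sum_congr rfl fun k _ ↦ ?_
  rw [div_pow, show k + r + 1 = k + (r + 1) by ring, pow_add]
  field_simp
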